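/- arXiv:2604.10325 — 4 statements merged into one kernel-verified Lean document; each statement's English description precedes it below -/
import Mathlib

section
/- Let h₁, h₂ be nonzero vectors in ℂ^n and w₁ a unit vector in ℂ^n. Define η₁₁ = |⟨w₁, h₁/‖h₁‖⟩|², H₂₁* = |⟨h₁/‖h₁‖, h₂⟩|², and H₂₁ = |⟨w₁, h₂⟩|². If 0 < η₁₁ ≤ 1 and the inner product ⟨w₁, h₁/‖h₁‖⟩ is real and nonnegative, then |H₂₁* - H₂₁| ≤ 2‖h₂‖² · √(2 - 2η₁₁). -/
open scoped ComplexInnerProductSpace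

theorem stmt_1 {n : ℕ} (h₁ h₂ w₁ : EuclideanSpace ℂ (Fin n))
    (hh₁ : h₁ ≠ 0) (hh₂ : h₂ ≠ 0) (hw₁ : ‖w₁‖ = 1)
    (η₁₁ H₂₁s H₂₁ : ℝ)
    (hη : η₁₁ = ‖⟪w₁, (‖h₁‖ : ℂ)⁻¹ • h₁⟫‖ ^ 2)
    (hHs : H₂₁s = ‖⟪(‖h₁‖ : ℂ)⁻¹ • h₁, h₂⟫‖ ^ 2)
    (hH : H₂₁ = ‖⟪w₁, h₂⟫‖ ^ 2)
    (hηpos : 0 < η₁₁) (hηle : η₁₁ ≤ 1)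
    (him : (⟪w₁, (‖h₁‖ : ℂ)⁻¹ • h₁⟫).im = 0)
    (hre : 0 ≤ (⟪w₁, (‖h₁‖ : ℂ)⁻¹ • h₁⟫).re) :
    |H₂₁s - H₂₁| ≤ 2 * ‖h₂‖ ^ 2 * Real.sqrt (2 - 2 * η₁₁) := by
  set u : EuclideanSpace ℂ (Fin n) := (‖h₁‖ : ℂ)⁻¹ • h₁ with hu
  have hn1 : ‖h₁‖ ≠ 0 := norm_ne_zero_iff.mpr hh₁
  have hun : ‖u‖ = 1 := by
    rw [hu, norm_smul]
    simp [norm_inv, hn1]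
  set r : ℝ := (⟪w₁, u⟫).re with hr
  have hz : (⟪w₁, u⟫ : ℂ) = (r : ℂ) := Complex.ext rfl (by simp only [Complex.ofReal_im, him])
  have habs : ‖⟪w₁, u⟫‖ = r := by rw [hz]; simp [abs_of_nonneg hre]
  have hη' : η₁₁ = r ^ 2 := by rw [hη, habs]
  have hr1 : r ≤ 1 := by
    nlinarith [hη' ▸ hηle, hre]
  have hηr : η₁₁ ≤ r := by nlinarith
  -- norm of u - w₁
  have hsq : ‖u - w₁‖ ^ 2 = 2 - 2 * r := by
    have := @norm_sub_sq ℂ _ _ _ _ u w₁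
    have hconj : (⟪u, w₁⟫ : ℂ) = (r : ℂ) := by
      rw [← inner_conj_symm u w₁, hz]; simp
    rw [this, hun, hw₁, hconj]
    simp [RCLike.ofReal_re]
    ring
  have hnorm_le : ‖u - w₁‖ ≤ Real.sqrt (2 - 2 * η₁₁) := by
    rw [← Real.sqrt_sq (norm_nonneg (u - w₁)), hsq]
    exact Real.sqrt_le_sqrt (by linarith)
  set a : ℝ := ‖⟪u, h₂⟫‖ with ha
  set b : ℝ := ‖⟪w₁, h₂⟫‖ with hb
  have hale : a ≤ ‖h₂‖ := by
    calc a ≤ ‖u‖ * ‖h₂‖ := norm_inner_le_norm u h₂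
    _ = ‖h₂‖ := by rw [hun, one_mul]
  have hble : b ≤ ‖h₂‖ := by
    calc b ≤ ‖w₁‖ * ‖h₂‖ := norm_inner_le_norm w₁ h₂
    _ = ‖h₂‖ := by rw [hw₁, one_mul]
  have hdiff : |a - b| ≤ ‖u - w₁‖ * ‖h₂‖ := by
    calc |a - b| ≤ ‖⟪u, h₂⟫ - ⟪w₁, h₂⟫‖ := abs_norm_sub_norm_le _ _
    _ = ‖⟪u - w₁, h₂⟫‖ := by rw [← inner_sub_left]
    _ ≤ ‖u - w₁‖ * ‖h₂‖ := norm_inner_le_norm _ _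
  have ha0 : 0 ≤ a := norm_nonneg _
  have hb0 : 0 ≤ b := norm_nonneg _
  have key : |a ^ 2 - b ^ 2| ≤ (‖u - w₁‖ * ‖h₂‖) * (2 * ‖h₂‖) := by
    have : |a ^ 2 - b ^ 2| = |a - b| * |a + b| := by
      rw [← abs_mul]; ring_nf
    rw [this]
    apply mul_le_mul hdiff _ (abs_nonneg _) (by positivity)
    rw [abs_of_nonneg (by linarith)]
    linarith
  rw [hHs, hH]
  calc |a ^ 2 - b ^ 2| ≤ (‖u - w₁‖ * ‖h₂‖) * (2 * ‖h₂‖) := key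
  _ = 2 * ‖h₂‖ ^ 2 * ‖u - w₁‖ := by ring
  _ ≤ 2 * ‖h₂‖ ^ 2 * Real.sqrt (2 - 2 * η₁₁) := by
      apply mul_le_mul_of_nonneg_left hnorm_le (by positivity)
end

section
/- For positive reals σ, P and reals H₂, H₂₁* with H₂ ≥ H₂₁* ≥ 0, define R(β) = log₂(β·P·(H₂₁* - H₂) + σ² + P·H₂) - log₂(β·P·H₂₁* + σ²) for β ∈ [0,1]. Then for any β*, β_q in [0,1], |R(β*) - R(β_q)| ≤ (P/ln 2)·( H₂₁*/σ² + (H₂ - H₂₁*)/(σ² + P·H₂₁*) ) · |β* - β_q|. -/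
theorem stmt_3 (H₂ H₂₁ P σ2 : ℝ) (h1 : H₂ ≥ H₂₁) (h2 : H₂₁ ≥ 0)
    (hP : 0 < P) (hσ : 0 < σ2)
    (R : ℝ → ℝ)
    (hR : ∀ β, R β = Real.logb 2 (β * P * (H₂₁ - H₂) + σ2 + P * H₂)
      - Real.logb 2 (β * P * H₂₁ + σ2)) :
    ∀ βs ∈ Set.Icc (0:ℝ) 1, ∀ βq ∈ Set.Icc (0:ℝ) 1,
      |R βs - R βq| ≤
        (P / Real.log 2) * (H₂₁ / σ2 + (H₂ - H₂₁) / (σ2 + P * H₂₁)) * |βs - βq| := by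
  intro βs hβs βq hβq
  set A : ℝ := P * (H₂₁ - H₂) with hA
  set B : ℝ := σ2 + P * H₂ with hB
  set C : ℝ := P * H₂₁ with hC
  have hAle : A ≤ 0 := mul_nonpos_of_nonneg_of_nonpos hP.le (by linarith)
  have hCnn : 0 ≤ C := mul_nonneg hP.le h2
  have hABpos : 0 < σ2 + P * H₂₁ := by positivity
  have hlog2 : (0:ℝ) < Real.log 2 := Real.log_pos one_lt_two
  -- lower bounds on the arguments for β ∈ [0,1]
  have harg1 : ∀ x ∈ Set.Icc (0:ℝ) 1, σ2 + P * H₂₁ ≤ x * A + B := by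
    intro x hx
    have : A ≤ x * A := by nlinarith [hx.1, hx.2]
    simp only [hB, hA] at *
    nlinarith
  have harg2 : ∀ x ∈ Set.Icc (0:ℝ) 1, σ2 ≤ x * C + σ2 := by
    intro x hx
    nlinarith [hx.1, mul_nonneg hx.1 hCnn]
  have harg1pos : ∀ x ∈ Set.Icc (0:ℝ) 1, 0 < x * A + B := fun x hx =>
    lt_of_lt_of_le hABpos (harg1 x hx)
  have harg2pos : ∀ x ∈ Set.Icc (0:ℝ) 1, 0 < x * C + σ2 := fun x hx =>
    lt_of_lt_of_le hσ (harg2 x hx)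
  -- derivative
  set f' : ℝ → ℝ := fun x => (A / (x * A + B) - C / (x * C + σ2)) / Real.log 2 with hf'
  have hderiv : ∀ x ∈ Set.Icc (0:ℝ) 1,
      HasDerivWithinAt R (f' x) (Set.Icc (0:ℝ) 1) x := by
    intro x hx
    have h1d : HasDerivAt (fun y : ℝ => y * A + B) A x := by
      simpa using ((hasDerivAt_id x).mul_const A).add_const B
    have h2d : HasDerivAt (fun y : ℝ => y * C + σ2) C x := by
      simpa using ((hasDerivAt_id x).mul_const C).add_const σ2
    have hlog1 : HasDerivAt (fun y : ℝ => Real.log (y * A + B)) (A / (x * A + B)) x := by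
      have := (Real.hasDerivAt_log (ne_of_gt (harg1pos x hx))).comp x h1d
      simpa [div_eq_inv_mul, Function.comp_def] using this
    have hlog2' : HasDerivAt (fun y : ℝ => Real.log (y * C + σ2)) (C / (x * C + σ2)) x := by
      have := (Real.hasDerivAt_log (ne_of_gt (harg2pos x hx))).comp x h2d
      simpa [div_eq_inv_mul, Function.comp_def] using this
    have hcomb : HasDerivAt
        (fun y : ℝ => (Real.log (y * A + B) - Real.log (y * C + σ2)) / Real.log 2)
        (f' x) x := by
      simpa [hf', sub_div] using (hlog1.sub hlog2').div_const (Real.log 2)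
    have heq : R = fun y : ℝ =>
        (Real.log (y * A + B) - Real.log (y * C + σ2)) / Real.log 2 := by
      funext y
      rw [hR y]
      simp only [Real.logb, hA, hB, hC]
      ring_nf
    rw [heq]
    exact hcomb.hasDerivWithinAt
  -- bound on derivative
  set L : ℝ := (P / Real.log 2) * (H₂₁ / σ2 + (H₂ - H₂₁) / (σ2 + P * H₂₁)) with hL
  have hbound : ∀ x ∈ Set.Icc (0:ℝ) 1, ‖f' x‖ ≤ L := by
    intro x hx
    have p1 := harg1pos x hx
    have p2 := harg2pos x hx
    have hb1 : -A / (x * A + B) ≤ -A / (σ2 + P * H₂₁) :=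
      div_le_div_of_nonneg_left (by linarith) hABpos (harg1 x hx)
    have hb2 : C / (x * C + σ2) ≤ C / σ2 :=
      div_le_div_of_nonneg_left hCnn hσ (harg2 x hx)
    have hnonpos : A / (x * A + B) - C / (x * C + σ2) ≤ 0 := by
      have := div_nonpos_of_nonpos_of_nonneg hAle p1.le
      have := div_nonneg hCnn p2.le
      linarith
    have : ‖f' x‖ = (C / (x * C + σ2) - A / (x * A + B)) / Real.log 2 := by
      rw [hf', Real.norm_eq_abs, abs_div, abs_of_pos hlog2, abs_of_nonpos hnonpos]
      ring_nf
    rw [this, hL]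
    have hLeq : (P / Real.log 2) * (H₂₁ / σ2 + (H₂ - H₂₁) / (σ2 + P * H₂₁))
        = (C / σ2 + -A / (σ2 + P * H₂₁)) / Real.log 2 := by
      rw [hC, hA]
      field_simp
      ring
    rw [hLeq]
    gcongr
    have : A / (x * A + B) = -(-A / (x * A + B)) := by ring
    linarith [hb1, hb2]
  have := Convex.norm_image_sub_le_of_norm_hasDerivWithin_le hderiv hbound
    (convex_Icc 0 1) hβq hβs
  simpa [Real.norm_eq_abs] using this
end

section
/- Consider the function g(β) = σ²(H₁₁ − H₂₁)·(βH₂₁ + σ² + (1−β)H₂₂) − (H₂₂ − H₂₁)·(βH₁₁ + σ²)(βH₂₁ + σ²), where H₁₁ > H₂₂ > H₂₁ ≥ 0 and σ² > 0. Then g, as a quadratic polynomial in β, has at most one root in the open interval (0,1). -/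
theorem stmt_6 (H₁₁ H₂₂ H₂₁ σ2 : ℝ) (h1 : H₁₁ > H₂₂) (h2 : H₂₂ > H₂₁)
    (h3 : H₂₁ ≥ 0) (hσ : 0 < σ2) :
    Set.Subsingleton {β ∈ Set.Ioo (0:ℝ) 1 |
      σ2 * (H₁₁ - H₂₁) * (β * H₂₁ + σ2 + (1 - β) * H₂₂)
        - (H₂₂ - H₂₁) * ((β * H₁₁ + σ2) * (β * H₂₁ + σ2)) = 0} := by
  rintro x ⟨⟨hx0, hx1⟩, hgx⟩ y ⟨⟨hy0, hy1⟩, hgy⟩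
  by_contra hne
  rcases lt_or_gt_of_ne hne with h | h
  · nlinarith [mul_pos hσ (sub_pos.mpr (h2.trans h1)), mul_nonneg (mul_nonneg (sub_pos.mpr h2).le h3) (sub_pos.mpr h).le, mul_pos (sub_pos.mpr h2) hσ, mul_pos (mul_pos (sub_pos.mpr h2) hσ) (sub_pos.mpr h), mul_nonneg (mul_nonneg (mul_nonneg (sub_pos.mpr h2).le h3) (sub_pos.mpr h).le) (add_pos hx0 hy0).le]
  · nlinarith [mul_pos hσ (sub_pos.mpr (h2.trans h1)), mul_nonneg (mul_nonneg (sub_pos.mpr h2).le h3) (sub_pos.mpr h).le, mul_pos (sub_pos.mpr h2) hσ, mul_pos (mul_pos (sub_pos.mpr h2) hσ) (sub_pos.mpr h), mul_nonneg (mul_nonneg (mul_nonneg (sub_pos.mpr h2).le h3) (sub_pos.mpr h).le) (add_pos hx0 hy0).le]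
end

section
/- Let h₂ ∈ ℂ^n be nonzero, w₁, w₂ unit vectors, η₂₂ = |⟨w₂, h₂⟩|²/‖h₂‖² with ⟨w₂, h₂/‖h₂‖⟩ real nonnegative and 0 < η₂₂ ≤ 1. Then | |⟨w₁, h₂⟩|² − ‖h₂‖²·|⟨w₂, w₁⟩|² | ≤ 2‖h₂‖²·√(2 − 2η₂₂). -/
/-!
Write `u = h₂ / ‖h₂‖`. Since `‖⟪w₁, h₂⟫‖ = ‖h₂‖ ‖⟪w₁, u⟫‖`, the left-hand side is
`‖h₂‖² |a² - b²|` with `a = ‖⟪w₁, u⟫‖`, `b = ‖⟪w₁, w₂⟫‖` both at most `1`, so it is at most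
`2 ‖h₂‖² |a - b| ≤ 2 ‖h₂‖² ‖u - w₂‖`. As `⟪w₂, u⟫` is real and nonnegative, it equals
`√η₂₂ ≥ η₂₂`, whence `‖u - w₂‖² = 2 - 2 √η₂₂ ≤ 2 - 2 η₂₂`.
-/

open scoped InnerProductSpace ComplexInnerProductSpace

open RCLike

section

variable {𝕜 E : Type*} [RCLike 𝕜] [NormedAddCommGroup E] [InnerProductSpace 𝕜 E]

lemma abs_norm_inner_sq_sub_norm_inner_sq_le {x y z : E} (hx : ‖x‖ ≤ 1) (hy : ‖y‖ ≤ 1)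
    (hz : ‖z‖ ≤ 1) : |‖⟪x, y⟫_𝕜‖ ^ 2 - ‖⟪x, z⟫_𝕜‖ ^ 2| ≤ 2 * ‖y - z‖ := by
  have hxy : ‖⟪x, y⟫_𝕜‖ ≤ 1 := (norm_inner_le_norm x y).trans (mul_le_one₀ hx (norm_nonneg _) hy)
  have hxz : ‖⟪x, z⟫_𝕜‖ ≤ 1 := (norm_inner_le_norm x z).trans (mul_le_one₀ hx (norm_nonneg _) hz)
  have hdiff : |‖⟪x, y⟫_𝕜‖ - ‖⟪x, z⟫_𝕜‖| ≤ ‖y - z‖ :=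
    calc |‖⟪x, y⟫_𝕜‖ - ‖⟪x, z⟫_𝕜‖| ≤ ‖⟪x, y⟫_𝕜 - ⟪x, z⟫_𝕜‖ := abs_norm_sub_norm_le _ _
      _ = ‖⟪x, y - z⟫_𝕜‖ := by rw [inner_sub_right]
      _ ≤ ‖x‖ * ‖y - z‖ := norm_inner_le_norm _ _
      _ ≤ ‖y - z‖ := mul_le_of_le_one_left (norm_nonneg _) hx
  calc |‖⟪x, y⟫_𝕜‖ ^ 2 - ‖⟪x, z⟫_𝕜‖ ^ 2|
        = (‖⟪x, y⟫_𝕜‖ + ‖⟪x, z⟫_𝕜‖) * |‖⟪x, y⟫_𝕜‖ - ‖⟪x, z⟫_𝕜‖| := by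
        rw [sq_sub_sq, abs_mul, abs_of_nonneg (by positivity)]
    _ ≤ 2 * ‖y - z‖ := mul_le_mul (by linarith) hdiff (abs_nonneg _) zero_le_two

lemma norm_sub_le_sqrt_two_sub_two_mul_norm_inner_sq {u w : E} (hu : ‖u‖ ≤ 1) (hw : ‖w‖ ≤ 1)
    (him : im ⟪w, u⟫_𝕜 = 0) (hre : 0 ≤ re ⟪w, u⟫_𝕜) :
    ‖w - u‖ ≤ √(2 - 2 * ‖⟪w, u⟫_𝕜‖ ^ 2) := by
  have hre_le : re ⟪w, u⟫_𝕜 ≤ 1 :=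
    (re_le_norm _).trans ((norm_inner_le_norm w u).trans (mul_le_one₀ hw (norm_nonneg _) hu))
  have hnorm_sq : ‖⟪w, u⟫_𝕜‖ ^ 2 = re ⟪w, u⟫_𝕜 ^ 2 := by rw [norm_sq_eq_def, him]; ring
  have hsub_sq : ‖w - u‖ ^ 2 ≤ 2 - 2 * re ⟪w, u⟫_𝕜 := by
    rw [@norm_sub_sq 𝕜]
    nlinarith [norm_nonneg w, norm_nonneg u]
  rw [Real.le_sqrt (norm_nonneg _) (by nlinarith)]
  nlinarith

end

theorem stmt_16_general {n : ℕ} (h₂ w₁ w₂ : EuclideanSpace ℂ (Fin n))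
    (hh₂ : h₂ ≠ 0) (hw₁ : ‖w₁‖ = 1) (hw₂ : ‖w₂‖ = 1)
    (η₂₂ : ℝ) (hη : η₂₂ = ‖⟪w₂, h₂⟫‖ ^ 2 / ‖h₂‖ ^ 2)
    (him : (⟪w₂, (‖h₂‖ : ℂ)⁻¹ • h₂⟫).im = 0)
    (hre : 0 ≤ (⟪w₂, (‖h₂‖ : ℂ)⁻¹ • h₂⟫).re) :
    |‖⟪w₁, h₂⟫‖ ^ 2 - ‖h₂‖ ^ 2 * ‖⟪w₂, w₁⟫‖ ^ 2| ≤
      2 * ‖h₂‖ ^ 2 * Real.sqrt (2 - 2 * η₂₂) := by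
  set u : EuclideanSpace ℂ (Fin n) := (‖h₂‖ : ℂ)⁻¹ • h₂
  have hh₂_norm : ‖h₂‖ ≠ 0 := norm_ne_zero_iff.mpr hh₂
  have hu : ‖u‖ = 1 := norm_smul_inv_norm hh₂
  have hη_u : η₂₂ = ‖⟪w₂, u⟫‖ ^ 2 := by
    rw [hη, inner_smul_right, norm_mul, norm_inv, Complex.norm_real, norm_norm]
    field_simp
  have hscale : ‖⟪w₁, h₂⟫‖ = ‖h₂‖ * ‖⟪w₁, u⟫‖ := by
    rw [inner_smul_right, norm_mul, norm_inv, Complex.norm_real, norm_norm,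
      mul_inv_cancel_left₀ hh₂_norm]
  calc |‖⟪w₁, h₂⟫‖ ^ 2 - ‖h₂‖ ^ 2 * ‖⟪w₂, w₁⟫‖ ^ 2|
      = ‖h₂‖ ^ 2 * |‖⟪w₁, u⟫‖ ^ 2 - ‖⟪w₁, w₂⟫‖ ^ 2| := by
        rw [hscale, norm_inner_symm w₂ w₁, mul_pow, ← mul_sub, abs_mul,
          abs_of_nonneg (by positivity)]
    _ ≤ ‖h₂‖ ^ 2 * (2 * ‖w₂ - u‖) := by
        rw [norm_sub_rev]
        gcongr
        exact abs_norm_inner_sq_sub_norm_inner_sq_le hw₁.le hu.le hw₂.le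
    _ ≤ ‖h₂‖ ^ 2 * (2 * √(2 - 2 * η₂₂)) := by
        rw [hη_u]
        gcongr
        exact norm_sub_le_sqrt_two_sub_two_mul_norm_inner_sq hu.le hw₂.le him hre
    _ = 2 * ‖h₂‖ ^ 2 * √(2 - 2 * η₂₂) := by ring

theorem stmt_16 {n : ℕ} (h₂ w₁ w₂ : EuclideanSpace ℂ (Fin n))
    (hh₂ : h₂ ≠ 0) (hw₁ : ‖w₁‖ = 1) (hw₂ : ‖w₂‖ = 1)
    (η₂₂ : ℝ) (hη : η₂₂ = ‖⟪w₂, h₂⟫‖ ^ 2 / ‖h₂‖ ^ 2)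
    (him : (⟪w₂, (‖h₂‖ : ℂ)⁻¹ • h₂⟫).im = 0)
    (hre : 0 ≤ (⟪w₂, (‖h₂‖ : ℂ)⁻¹ • h₂⟫).re)
    (hηpos : 0 < η₂₂) (hηle : η₂₂ ≤ 1) :
    |‖⟪w₁, h₂⟫‖ ^ 2 - ‖h₂‖ ^ 2 * ‖⟪w₂, w₁⟫‖ ^ 2| ≤
      2 * ‖h₂‖ ^ 2 * Real.sqrt (2 - 2 * η₂₂) :=
  stmt_16_general h₂ w₁ w₂ hh₂ hw₁ hw₂ η₂₂ hη him hre
end
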